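/- (SqPO concurrency, analysis, for rules without conditions.) Let C be an adhesive, balanced category with epi–mono factorizations, effective unions, a strict initial object whose morphisms out of it are monomorphisms, and in which every composable pair of monomorphisms admits a final pullback complement. Let r₁ = (O₁ ⟵o₁ K₁ ⟶i₁ I₁) and r₂ = (O₂ ⟵o₂ K₂ ⟶i₂ I₂) be linear rules, and let μ₂₁ = (I₂ ⟵m₂ M₂₁ ⟶m₁ O₁) be a span of monomorphisms for which the SqPO-composite rule r₂₁ = r₂ ▷μ₂₁◁ r₁ = (O₂₁ ⟵ K₂₁ ⟶ I₂₁) exists. Then for every object X₀ and every monomorphism m₂₁ : I₂₁ ⟶ X₀, there exist monomorphisms m₁ : I₁ ⟶ X₀ and m₂ : I₂ ⟶ X₁, where X₁ is the result of the SqPO derivation of X₀ along r₁ at m₁, such that the result X₂ of the SqPO derivation of X₁ along r₂ at m₂ is isomorphic to the result of the SqPO derivation of X₀ along r₂₁ at m₂₁. -/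

import Mathlib

/-!
Let `(kb, l)` be the FPC of `(j₁, m₂₁)`. In an adhesive category a pushout along monos is itself
an FPC, so pasting the pushout (v) onto `(kb, l)` gives the first derivation, at
`m₁ = p₁ ≫ m₂₁`. Its pushout `X₁` factors through the pushout-complement square (iv): this yields
`n : N₂₁ ⟶ X₁` with `(ν₁, kb, n, o₁')` a pushout, and `n` is mono because adhesive categories
have effective unions. The second derivation is taken at `m₂ = m₂' ≫ n`, its FPC being (ii)
pasted with the FPC of `(ν₂, n)`. Restricting the latter along the pushout square over `X₁`
gives, by pullback stability of FPCs and the van Kampen property, an FPC of `(q₁, kb)` and a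
pushout square on `q₂`. Pasted with `(kb, l)` and with the factorisation of the pushout `X₂`
through (iii), these form a derivation of `X₀` along the composite rule whose result is `X₂`
itself.
-/

open CategoryTheory CategoryTheory.Limits

universe v u

/-- Given morphisms `a : A ⟶ B` and `c : B ⟶ C`, the pair `(d : D ⟶ C, b : A ⟶ D)` is a
*final pullback complement* of `(c, a)` if the square `a ≫ c = b ≫ d` is a pullback and
for every pullback square `x ≫ c = y ≫ z` and every `w : P ⟶ A` with `w ≫ a = x`,
there is a unique `w* : Q ⟶ D` with `w* ≫ d = z` and `y ≫ w* = w ≫ b`. -/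
structure IsFinalPullbackComplement {𝒞 : Type u} [Category.{v} 𝒞] {A B C D : 𝒞}
    (a : A ⟶ B) (c : B ⟶ C) (b : A ⟶ D) (d : D ⟶ C) : Prop where
  isPullback : CategoryTheory.IsPullback a b c d
  universal : ∀ {P Q : 𝒞} (x : P ⟶ B) (y : P ⟶ Q) (z : Q ⟶ C),
    CategoryTheory.IsPullback x y c z → ∀ (w : P ⟶ A), w ≫ a = x →
      ∃! wStar : Q ⟶ D, wStar ≫ d = z ∧ y ≫ wStar = w ≫ b

/-- A category has *epi–mono factorizations* if every morphism factors as an epimorphism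
followed by a monomorphism. -/
def HasEpiMonoFactorizations (𝒞 : Type u) [Category.{v} 𝒞] : Prop :=
  ∀ {X Y : 𝒞} (f : X ⟶ Y), ∃ (E : 𝒞) (e : X ⟶ E) (m : E ⟶ Y), Epi e ∧ Mono m ∧ e ≫ m = f

/-- A category has *effective unions* if for every pushout square of monomorphisms
and all monomorphisms `b`, `c` forming with the span legs a pullback square, the unique
mediating morphism out of the pushout is a monomorphism. -/
def HasEffectiveUnions (𝒞 : Type u) [Category.{v} 𝒞] : Prop :=
  ∀ {A B C D E : 𝒞} (b₀ : A ⟶ B) (c₀ : A ⟶ C) (e : B ⟶ D) (f : C ⟶ D)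
    (b : B ⟶ E) (c : C ⟶ E) (d : D ⟶ E),
    Mono b₀ → Mono c₀ → Mono e → Mono f → Mono b → Mono c →
    IsPushout b₀ c₀ e f → IsPullback b₀ c₀ b c →
    e ≫ d = b → f ≫ d = c → Mono d

section

variable {𝒞 : Type u} [Category.{v} 𝒞]

theorem CategoryTheory.IsPullback.of_snd_comp_mono {P A B' B Z : 𝒞} {f : P ⟶ A} {g : P ⟶ B'}
    {w : B' ⟶ B} {h : A ⟶ Z} {i : B ⟶ Z} [Mono w] (H : IsPullback f (g ≫ w) h i) :
    IsPullback f g h (w ≫ i) :=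
  IsPullback.of_isLimit' ⟨by simpa using H.w⟩ <| PullbackCone.IsLimit.mk _
    (fun s => H.lift s.fst (s.snd ≫ w) (by simpa using s.condition))
    (fun s => H.lift_fst ..)
    (fun s => by rw [← cancel_mono w]; simp)
    (fun s m h₁ h₂ => H.hom_ext (by simpa using h₁) (by simp [← h₂]))

theorem CategoryTheory.Adhesive.mono_of_isPushout_of_isPullback [Adhesive 𝒞]
    {W A B Z D : 𝒞} {f : W ⟶ A} {g : W ⟶ B} {a : A ⟶ Z} {b : B ⟶ Z} {h : A ⟶ D} {i : B ⟶ D}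
    {d : D ⟶ Z} [Mono a] [Mono b] (hpb : IsPullback f g a b) (hpo : IsPushout f g h i)
    (ha : h ≫ d = a) (hb : i ≫ d = b) : Mono d := by
  have hpo' : IsPushout (pullback.fst a b) (pullback.snd a b) h i :=
    hpo.of_iso hpb.isoPullback (Iso.refl _) (Iso.refl _) (Iso.refl _)
      (by simp) (by simp) (by simp) (by simp)
  obtain rfl : d = hpo'.isoPushout.hom ≫ pushout.desc a b pullback.condition :=
    hpo'.hom_ext (by simp [ha]; exact (pushout.inl_desc _ _ _).symm)
      (by simp [hb]; exact (pushout.inr_desc _ _ _).symm)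
  infer_instance

theorem CategoryTheory.IsPushout.exists_isPushout_of_isPushout_comp {K O Kc N L X : 𝒞}
    {o : K ⟶ O} {κ : K ⟶ Kc} {m : O ⟶ N} {ν : Kc ⟶ N} {k : Kc ⟶ L} {m' : O ⟶ X}
    {ν' : L ⟶ X} (h : IsPushout o κ m ν) (h' : IsPushout o (κ ≫ k) m' ν') :
    ∃ n : N ⟶ X, m ≫ n = m' ∧ IsPushout ν k n ν' := by
  have hw : o ≫ m' = κ ≫ k ≫ ν' := by simpa using h'.w
  refine ⟨h.desc m' (k ≫ ν') hw, h.inl_desc _ _ hw, IsPushout.of_top ?_ (h.inr_desc _ _ hw) h⟩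
  rwa [h.inl_desc]

theorem CategoryTheory.Adhesive.mono_of_isPushout_comp [Adhesive 𝒞] {K O Kc N L X : 𝒞}
    {o : K ⟶ O} {κ : K ⟶ Kc} {m : O ⟶ N} {ν : Kc ⟶ N} {k : Kc ⟶ L} {m' : O ⟶ X}
    {ν' : L ⟶ X} {n : N ⟶ X} [Mono o] [Mono κ] [Mono k] (h : IsPushout o κ m ν)
    (h' : IsPushout o (κ ≫ k) m' ν') (hm : m ≫ n = m') (hν : ν ≫ n = k ≫ ν') : Mono n :=
  have : Mono m' := Adhesive.mono_of_isPushout_of_mono_right h'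
  have : Mono ν' := Adhesive.mono_of_isPushout_of_mono_left h'
  Adhesive.mono_of_isPushout_of_isPullback
    (Adhesive.isPullback_of_isPushout_of_mono_left h').of_snd_comp_mono h hm hν

theorem CategoryTheory.IsPushout.isFinalPullbackComplement [Adhesive 𝒞] {K Kc I N : 𝒞}
    {κ : K ⟶ Kc} {i : K ⟶ I} {j : Kc ⟶ N} {p : I ⟶ N} [Mono κ] [Mono i]
    (hPO : IsPushout κ i j p) : IsFinalPullbackComplement i p κ j := by
  have : Mono j := Adhesive.mono_of_isPushout_of_mono_right hPO
  refine ⟨(Adhesive.isPullback_of_isPushout_of_mono_left hPO).flip,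
    fun {P Q} x y z hpb w hw => ?_⟩
  have hPk := IsPullback.of_hasPullback j z
  have hwx : IsPullback w (𝟙 P) i x := IsPullback.of_vert_isIso_mono ⟨by simp [hw]⟩
  have he : (w ≫ κ) ≫ j = y ≫ z := by rw [Category.assoc, hPO.w, reassoc_of% hw, hpb.w]
  set e := hPk.lift _ _ he
  have hey : e ≫ pullback.snd j z = y := hPk.lift_snd _ _ he
  have hback : IsPullback w e κ (pullback.fst j z) := by
    refine IsPullback.of_bot ?_ (hPk.lift_fst _ _ he).symm hPk
    simpa [hey, hPO.w] using hwx.paste_vert hpb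
  -- van Kampen: over the pushout `hPO`, the square `e, 𝟙 P, pullback.snd, y` is a pushout,
  -- so the pullback of `j` along `z` is all of `Q`
  have htop : IsPushout e (𝟙 P) (pullback.snd j z) y :=
    (Adhesive.van_kampen hPO _ _ _ _ w _ x z hback.flip hwx.flip ⟨hPk.w.symm⟩ ⟨hpb.w.symm⟩
      ⟨by simp [hey]⟩).mpr ⟨hPk.flip, hpb.flip⟩
  have : IsIso (pullback.snd j z) := htop.isIso_inl_of_isIso
  refine ⟨inv (pullback.snd j z) ≫ pullback.fst j z, ⟨by simp [hPk.w], ?_⟩, fun V ⟨hV, _⟩ => ?_⟩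
  · rw [← hey, Category.assoc, IsIso.hom_inv_id_assoc, hPk.lift_fst]
  · rw [IsIso.eq_inv_comp, ← cancel_mono j]
    simp [hV, hPk.w]

namespace IsFinalPullbackComplement

variable {A B C D : 𝒞} {a : A ⟶ B} {c : B ⟶ C} {b : A ⟶ D} {d : D ⟶ C}

theorem mono_of_mono [Adhesive 𝒞] [Mono a] [Mono c] (hF : IsFinalPullbackComplement a c b d) :
    Mono d where
  right_cancellation {Z} u v huv := by
    have hR := IsPullback.of_hasPullback c (v ≫ d)
    -- `u` and `v` both solve the universal problem of `hF` posed by the pullback `hR`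
    have factor (t : Z ⟶ D) (ht : t ≫ d = v ≫ d) :
        pullback.snd c (v ≫ d) ≫ t = hF.isPullback.lift (pullback.fst c (v ≫ d))
          (pullback.snd c (v ≫ d) ≫ v) (by simp [hR.w]) ≫ b := by
      have hl := hF.isPullback.lift_snd (pullback.fst c (v ≫ d)) (pullback.snd c (v ≫ d) ≫ t)
        (by simp [hR.w, ht])
      rw [← hl]
      congr 1
      simp [← cancel_mono a]
    obtain ⟨w, -, hw⟩ := hF.universal _ _ _ hR _ (hF.isPullback.lift_fst _ _ _)
    exact (hw u ⟨huv, factor u huv⟩).trans (hw v ⟨rfl, factor v rfl⟩).symm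

theorem paste_vert [Adhesive 𝒞] {C' D' : 𝒞} {c' : C ⟶ C'} {b' : D ⟶ D'} {d' : D' ⟶ C'}
    [Mono c'] [Mono d'] (h₁ : IsFinalPullbackComplement a c b d)
    (h₂ : IsFinalPullbackComplement d c' b' d') :
    IsFinalPullbackComplement a (c ≫ c') (b ≫ b') d' := by
  refine ⟨h₁.isPullback.paste_vert h₂.isPullback, fun {P Q} x y z hpb w hw => ?_⟩
  have hR := IsPullback.of_hasPullback c' z
  have hξ : (x ≫ c) ≫ c' = y ≫ z := by simpa using hpb.w
  have htop : IsPullback x (hR.lift _ _ hξ) c (pullback.fst c' z) :=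
    IsPullback.of_bot (by simpa using hpb) (hR.lift_fst _ _ hξ).symm hR
  obtain ⟨ω, ⟨hω₁, hω₂⟩, -⟩ := h₁.universal _ _ _ htop w hw
  obtain ⟨W, ⟨hW₁, hW₂⟩, huniq⟩ := h₂.universal _ _ _ hR ω hω₁
  refine ⟨W, ⟨hW₁, ?_⟩, fun V ⟨hV₁, _⟩ => huniq V ⟨hV₁, ?_⟩⟩
  · rw [← hR.lift_snd _ _ hξ, Category.assoc, hW₂, reassoc_of% hω₂]
  · rw [← cancel_mono d']
    simp [hV₁, ← h₂.isPullback.w, reassoc_of% hω₁, hR.w]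

theorem paste_horiz {A₀ D₀ : 𝒞} {a₀ : A₀ ⟶ A} {b₀ : A₀ ⟶ D₀} {d₀ : D₀ ⟶ D} [Mono a]
    (h₁ : IsFinalPullbackComplement a₀ b b₀ d₀) (h₂ : IsFinalPullbackComplement a c b d) :
    IsFinalPullbackComplement (a₀ ≫ a) c b₀ (d₀ ≫ d) := by
  refine ⟨h₁.isPullback.paste_horiz h₂.isPullback, fun {P Q} x y z hpb w hw => ?_⟩
  obtain ⟨u, ⟨hu₁, hu₂⟩, huniq₂⟩ := h₂.universal x y z hpb (w ≫ a₀) (by simpa using hw)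
  have hmid : IsPullback (w ≫ a₀) y b u :=
    IsPullback.of_right (by simpa [hw, hu₁] using hpb) hu₂.symm h₂.isPullback
  obtain ⟨W, ⟨hW₁, hW₂⟩, huniq₁⟩ := h₁.universal _ y u hmid w rfl
  refine ⟨W, ⟨by simp [reassoc_of% hW₁, hu₁], hW₂⟩, fun V ⟨hV₁, hV₂⟩ => huniq₁ V ⟨?_, hV₂⟩⟩
  refine huniq₂ _ ⟨by simpa using hV₁, ?_⟩
  rw [reassoc_of% hV₂, ← h₁.isPullback.w, Category.assoc]

theorem baseChange {A' B' C' D' : 𝒞} {a' : A' ⟶ B'} {c' : B' ⟶ C'} {b' : A' ⟶ D'}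
    {d' : D' ⟶ C'} {φ : C' ⟶ C} {πA : A' ⟶ A} {πB : B' ⟶ B} {πD : D' ⟶ D}
    (hF : IsFinalPullbackComplement a c b d) (hA : IsPullback a' πA πB a)
    (hB : IsPullback πB c' c φ) (hD : IsPullback πD d' d φ)
    (hAD : πA ≫ b = b' ≫ πD) (hw : a' ≫ c' = b' ≫ d') :
    IsFinalPullbackComplement a' c' b' d' := by
  have hbig : IsPullback (b' ≫ πD) a' d (c' ≫ φ) := by
    simpa [hAD, hB.w] using hA.flip.paste_horiz hF.isPullback.flip
  refine ⟨(IsPullback.of_right hbig hw.symm hD).flip, fun {P Q} x y z hpb w hwx => ?_⟩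
  obtain ⟨u, ⟨hu₁, hu₂⟩, huniq⟩ := hF.universal _ y _ (hpb.paste_horiz hB) (w ≫ πA)
    (by rw [Category.assoc, ← hA.w, reassoc_of% hwx])
  refine ⟨hD.lift u z hu₁, ⟨hD.lift_snd _ _ _, hD.hom_ext ?_ ?_⟩, fun V ⟨hV₁, hV₂⟩ => ?_⟩
  · simp [hu₂, hAD]
  · simp [← hw, ← hpb.w, ← hwx]
  · refine hD.hom_ext (huniq _ ⟨?_, ?_⟩ ▸ (hD.lift_fst _ _ _).symm) (by simpa using hV₁)
    · rw [Category.assoc, hD.w, reassoc_of% hV₁]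
    · rw [reassoc_of% hV₂, Category.assoc, hAD]

theorem exists_isFinalPullbackComplement_isPushout [Adhesive 𝒞]
    {W X Y Z A D P : 𝒞} {f : W ⟶ X} {g : W ⟶ Y} {h : X ⟶ Z} {i : Y ⟶ Z} {a : A ⟶ X}
    {b : A ⟶ D} {d : D ⟶ Z} {q₁ : P ⟶ W} {q₂ : P ⟶ A} [Mono f]
    (hF : IsFinalPullbackComplement a h b d) (hsq : IsPushout f g h i)
    (hP : IsPullback q₂ q₁ a f) :
    ∃ (E : 𝒞) (e : P ⟶ E) (t₂ : E ⟶ D) (t₁ : E ⟶ Y),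
      IsFinalPullbackComplement q₁ g e t₁ ∧ IsPushout q₂ e b t₂ := by
  have : Mono i := Adhesive.mono_of_isPushout_of_mono_left hsq
  have hE := IsPullback.of_hasPullback i d
  obtain ⟨e, he₁, he₂⟩ : ∃ e, e ≫ pullback.fst i d = q₁ ≫ g ∧ e ≫ pullback.snd i d = q₂ ≫ b :=
    ⟨hE.lift _ _ (by rw [Category.assoc, ← hsq.w, ← reassoc_of% hP.w, hF.isPullback.w,
      Category.assoc]), hE.lift_fst .., hE.lift_snd ..⟩
  have hFE : IsFinalPullbackComplement q₁ g e (pullback.fst i d) :=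
    hF.baseChange hP.flip (Adhesive.isPullback_of_isPushout_of_mono_left hsq) hE.flip
      he₂.symm he₁.symm
  refine ⟨_, e, pullback.snd i d, _, hFE, ?_⟩
  exact (Adhesive.van_kampen hsq _ _ _ _ _ _ _ _ hP hFE.isPullback.flip ⟨hF.isPullback.w.symm⟩
    ⟨hE.w.symm⟩ ⟨he₂.symm⟩).mpr ⟨hF.isPullback.flip, hE.flip⟩

end IsFinalPullbackComplement

end

theorem sqpo_concurrency_analysis_general {𝒞 : Type u} [Category.{v} 𝒞]
    [Adhesive 𝒞]
    (hFPC : ∀ {A B C : 𝒞} (a : A ⟶ B) (c : B ⟶ C), Mono a → Mono c →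
      ∃ (D : 𝒞) (b : A ⟶ D) (d : D ⟶ C), IsFinalPullbackComplement a c b d)
    -- the two linear rules
    {O₁ K₁ I₁ O₂ K₂ I₂ : 𝒞}
    (o₁ : K₁ ⟶ O₁) (i₁ : K₁ ⟶ I₁) [Mono o₁] [Mono i₁]
    (o₂ : K₂ ⟶ O₂) (i₂ : K₂ ⟶ I₂) [Mono o₂] [Mono i₂]
    -- the span μ₂₁ = (I₂ ⟵s₂ M₂₁ ⟶s₁ O₁) of monomorphisms
    {M₂₁ : 𝒞} (s₂ : M₂₁ ⟶ I₂) (s₁ : M₂₁ ⟶ O₁) [Mono s₂] [Mono s₁]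
    -- the data exhibiting the SqPO-composite rule r₂₁ = r₂ ▷μ₂₁◁ r₁:
    -- (i) pushout N₂₁ of the span (s₂, s₁)
    {N₂₁ : 𝒞} (m₂' : I₂ ⟶ N₂₁) (m₁' : O₁ ⟶ N₂₁)
    (hN : IsPushout s₂ s₁ m₂' m₁')
    -- (ii) FPC of (m₂', i₂)
    {K₂c : 𝒞} (κ₂ : K₂ ⟶ K₂c) (ν₂ : K₂c ⟶ N₂₁)
    (hK₂c : IsFinalPullbackComplement i₂ m₂' κ₂ ν₂)
    -- (iii) pushout O₂₁ of (o₂, κ₂)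
    {O₂₁ : 𝒞} (oc : O₂ ⟶ O₂₁) (kc : K₂c ⟶ O₂₁)
    (hO₂₁ : IsPushout o₂ κ₂ oc kc)
    -- (iv) pushout complement of (o₁, m₁')
    {K₁c : 𝒞} (κ₁ : K₁ ⟶ K₁c) (ν₁ : K₁c ⟶ N₂₁)
    (hPOC : IsPushout o₁ κ₁ m₁' ν₁)
    -- (v) pushout I₂₁ of (κ₁, i₁)
    {I₂₁ : 𝒞} (j₁ : K₁c ⟶ I₂₁) (p₁ : I₁ ⟶ I₂₁)
    (hI₂₁ : IsPushout κ₁ i₁ j₁ p₁)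
    -- (vi) pullback K₂₁ of the cospan (ν₂, ν₁)
    {K₂₁ : 𝒞} (q₂ : K₂₁ ⟶ K₂c) (q₁ : K₂₁ ⟶ K₁c)
    (hK₂₁ : IsPullback q₂ q₁ ν₂ ν₁)
    -- an object X₀ and a monomorphic match of the composite rule
    {X₀ : 𝒞} (m₂₁ : I₂₁ ⟶ X₀) [Mono m₂₁] :
    -- there exist matches m₁, m₂ and SqPO derivations X₀ ⟹[r₁,m₁] X₁ ⟹[r₂,m₂] X₂
    -- such that X₂ is isomorphic to the result of the derivation X₀ ⟹[r₂₁,m₂₁]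
    ∃ (m₁ : I₁ ⟶ X₀), Mono m₁ ∧
    ∃ (Kbar₁ : 𝒞) (k₁ : K₁ ⟶ Kbar₁) (i₁' : Kbar₁ ⟶ X₀),
      IsFinalPullbackComplement i₁ m₁ k₁ i₁' ∧
    ∃ (X₁ : 𝒞) (m₁star : O₁ ⟶ X₁) (o₁' : Kbar₁ ⟶ X₁),
      IsPushout o₁ k₁ m₁star o₁' ∧
    ∃ (m₂ : I₂ ⟶ X₁), Mono m₂ ∧
    ∃ (Kbar₂ : 𝒞) (k₂ : K₂ ⟶ Kbar₂) (i₂' : Kbar₂ ⟶ X₁),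
      IsFinalPullbackComplement i₂ m₂ k₂ i₂' ∧
    ∃ (X₂ : 𝒞) (m₂star : O₂ ⟶ X₂) (o₂' : Kbar₂ ⟶ X₂),
      IsPushout o₂ k₂ m₂star o₂' ∧
    ∃ (Kbar : 𝒞) (kk : K₂₁ ⟶ Kbar) (ii : Kbar ⟶ X₀),
      IsFinalPullbackComplement (q₁ ≫ j₁) m₂₁ kk ii ∧
    ∃ (Y : 𝒞) (mm : O₂₁ ⟶ Y) (oo : Kbar ⟶ Y),
      IsPushout (q₂ ≫ kc) kk mm oo ∧ Nonempty (X₂ ≅ Y) := by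
  have : Mono m₂' := Adhesive.mono_of_isPushout_of_mono_right hN
  have : Mono m₁' := Adhesive.mono_of_isPushout_of_mono_left hN
  have : Mono κ₁ := (Adhesive.isPullback_of_isPushout_of_mono_left hPOC).mono_snd_of_mono
  have : Mono ν₁ := Adhesive.mono_of_isPushout_of_mono_left hPOC
  have : Mono j₁ := Adhesive.mono_of_isPushout_of_mono_right hI₂₁
  have : Mono p₁ := Adhesive.mono_of_isPushout_of_mono_left hI₂₁
  have : Mono ν₂ := hK₂c.mono_of_mono
  obtain ⟨L₁, kb, l, hFL⟩ := hFPC j₁ m₂₁ inferInstance inferInstance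
  have : Mono kb := hFL.isPullback.mono_snd_of_mono
  have : Mono l := hFL.mono_of_mono
  have hX₁ := IsPushout.of_hasPushout o₁ (κ₁ ≫ kb)
  obtain ⟨n, hmn, hν₁n⟩ := hPOC.exists_isPushout_of_isPushout_comp hX₁
  have : Mono n := Adhesive.mono_of_isPushout_comp hPOC hX₁ hmn hν₁n.w
  obtain ⟨L₂, κb, n', hFn⟩ := hFPC ν₂ n inferInstance inferInstance
  have : Mono n' := hFn.mono_of_mono
  have hX₂ := IsPushout.of_hasPushout o₂ (κ₂ ≫ κb)
  obtain ⟨_, kk, _, _, hFK, hK⟩ := hFn.exists_isFinalPullbackComplement_isPushout hν₁n hK₂₁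
  obtain ⟨mm, -, hO⟩ := hO₂₁.exists_isPushout_of_isPushout_comp hX₂
  exact ⟨p₁ ≫ m₂₁, inferInstance, _, _, _, hI₂₁.isFinalPullbackComplement.paste_vert hFL,
    _, _, _, hX₁, m₂' ≫ n, inferInstance, _, _, _, hK₂c.paste_vert hFn, _, _, _, hX₂,
    _, kk, _, hFK.paste_horiz hFL, _, _, _, hK.paste_horiz hO, ⟨Iso.refl _⟩⟩

/-- **SqPO concurrency theorem, analysis direction (rules without conditions).**
In an adhesive, balanced category with epi–mono factorizations, effective unions, a
strict initial object whose outgoing morphisms are monomorphisms, and in which every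
composable pair of monomorphisms admits a final pullback complement: given linear rules
`r₁`, `r₂`, a span of monomorphisms `μ₂₁ = (I₂ ⟵s₂ M₂₁ ⟶s₁ O₁)` for which the
SqPO-composite rule `r₂₁ = r₂ ▷μ₂₁◁ r₁ = (O₂₁ ⟵ q₂≫kc K₂₁ ⟶ q₁≫j₁ I₂₁)` exists, and
a monomorphism `m₂₁ : I₂₁ ⟶ X₀`, there exist monomorphisms `m₁ : I₁ ⟶ X₀` and
`m₂ : I₂ ⟶ X₁` (where `X₁` results from the SqPO derivation of `X₀` along `r₁` at `m₁`)
such that the result `X₂` of the SqPO derivation of `X₁` along `r₂` at `m₂` is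
isomorphic to the result of the SqPO derivation of `X₀` along `r₂₁` at `m₂₁`. -/
theorem sqpo_concurrency_analysis {𝒞 : Type u} [Category.{v} 𝒞]
    [Adhesive 𝒞] [Balanced 𝒞] [HasInitial 𝒞] [HasStrictInitialObjects 𝒞]
    [InitialMonoClass 𝒞]
    (hfact : HasEpiMonoFactorizations 𝒞) (heu : HasEffectiveUnions 𝒞)
    (hFPC : ∀ {A B C : 𝒞} (a : A ⟶ B) (c : B ⟶ C), Mono a → Mono c →
      ∃ (D : 𝒞) (b : A ⟶ D) (d : D ⟶ C), IsFinalPullbackComplement a c b d)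
    -- the two linear rules
    {O₁ K₁ I₁ O₂ K₂ I₂ : 𝒞}
    (o₁ : K₁ ⟶ O₁) (i₁ : K₁ ⟶ I₁) [Mono o₁] [Mono i₁]
    (o₂ : K₂ ⟶ O₂) (i₂ : K₂ ⟶ I₂) [Mono o₂] [Mono i₂]
    -- the span μ₂₁ = (I₂ ⟵s₂ M₂₁ ⟶s₁ O₁) of monomorphisms
    {M₂₁ : 𝒞} (s₂ : M₂₁ ⟶ I₂) (s₁ : M₂₁ ⟶ O₁) [Mono s₂] [Mono s₁]
    -- the data exhibiting the SqPO-composite rule r₂₁ = r₂ ▷μ₂₁◁ r₁: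
    -- (i) pushout N₂₁ of the span (s₂, s₁)
    {N₂₁ : 𝒞} (m₂' : I₂ ⟶ N₂₁) (m₁' : O₁ ⟶ N₂₁)
    (hN : IsPushout s₂ s₁ m₂' m₁')
    -- (ii) FPC of (m₂', i₂)
    {K₂c : 𝒞} (κ₂ : K₂ ⟶ K₂c) (ν₂ : K₂c ⟶ N₂₁)
    (hK₂c : IsFinalPullbackComplement i₂ m₂' κ₂ ν₂)
    -- (iii) pushout O₂₁ of (o₂, κ₂)
    {O₂₁ : 𝒞} (oc : O₂ ⟶ O₂₁) (kc : K₂c ⟶ O₂₁)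
    (hO₂₁ : IsPushout o₂ κ₂ oc kc)
    -- (iv) pushout complement of (o₁, m₁')
    {K₁c : 𝒞} (κ₁ : K₁ ⟶ K₁c) (ν₁ : K₁c ⟶ N₂₁)
    (hPOC : IsPushout o₁ κ₁ m₁' ν₁)
    -- (v) pushout I₂₁ of (κ₁, i₁)
    {I₂₁ : 𝒞} (j₁ : K₁c ⟶ I₂₁) (p₁ : I₁ ⟶ I₂₁)
    (hI₂₁ : IsPushout κ₁ i₁ j₁ p₁)
    -- (vi) pullback K₂₁ of the cospan (ν₂, ν₁)
    {K₂₁ : 𝒞} (q₂ : K₂₁ ⟶ K₂c) (q₁ : K₂₁ ⟶ K₁c)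
    (hK₂₁ : IsPullback q₂ q₁ ν₂ ν₁)
    -- an object X₀ and a monomorphic match of the composite rule
    {X₀ : 𝒞} (m₂₁ : I₂₁ ⟶ X₀) [Mono m₂₁] :
    -- there exist matches m₁, m₂ and SqPO derivations X₀ ⟹[r₁,m₁] X₁ ⟹[r₂,m₂] X₂
    -- such that X₂ is isomorphic to the result of the derivation X₀ ⟹[r₂₁,m₂₁]
    ∃ (m₁ : I₁ ⟶ X₀), Mono m₁ ∧
    ∃ (Kbar₁ : 𝒞) (k₁ : K₁ ⟶ Kbar₁) (i₁' : Kbar₁ ⟶ X₀),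
      IsFinalPullbackComplement i₁ m₁ k₁ i₁' ∧
    ∃ (X₁ : 𝒞) (m₁star : O₁ ⟶ X₁) (o₁' : Kbar₁ ⟶ X₁),
      IsPushout o₁ k₁ m₁star o₁' ∧
    ∃ (m₂ : I₂ ⟶ X₁), Mono m₂ ∧
    ∃ (Kbar₂ : 𝒞) (k₂ : K₂ ⟶ Kbar₂) (i₂' : Kbar₂ ⟶ X₁),
      IsFinalPullbackComplement i₂ m₂ k₂ i₂' ∧
    ∃ (X₂ : 𝒞) (m₂star : O₂ ⟶ X₂) (o₂' : Kbar₂ ⟶ X₂),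
      IsPushout o₂ k₂ m₂star o₂' ∧
    ∃ (Kbar : 𝒞) (kk : K₂₁ ⟶ Kbar) (ii : Kbar ⟶ X₀),
      IsFinalPullbackComplement (q₁ ≫ j₁) m₂₁ kk ii ∧
    ∃ (Y : 𝒞) (mm : O₂₁ ⟶ Y) (oo : Kbar ⟶ Y),
      IsPushout (q₂ ≫ kc) kk mm oo ∧ Nonempty (X₂ ≅ Y) :=
  sqpo_concurrency_analysis_general hFPC o₁ i₁ o₂ i₂ s₂ s₁ m₂' m₁' hN κ₂ ν₂ hK₂c oc kc hO₂₁ κ₁ ν₁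
    hPOC j₁ p₁ hI₂₁ q₂ q₁ hK₂₁ m₂₁
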